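/- Let π be a bounded probability density on ℝ that is continuous and strictly positive at a point θ₀. For ε ~ N(0,1) and n ≥ 1 set X_n = θ₀ + ε/√n, and let μ_n be the posterior probability measure on ℝ with Lebesgue density θ ↦ exp(−n(θ − X_n)²/2) π(θ) / ∫_ℝ exp(−n(u − X_n)²/2) π(u) du. Then the total variation distance between the image of μ_n under the map θ ↦ √n (θ − X_n) and the standard normal distribution N(0,1) converges to 0 in probability as n → ∞. -/

import Mathlib

open MeasureTheory ProbabilityTheory

/-- Total variation distance between two Borel measures on `ℝ`:
the supremum over Borel sets `B` of `|μ(B) − ν(B)|`. -/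
noncomputable def tvDist (μ ν : Measure ℝ) : ℝ :=
  ⨆ B : { s : Set ℝ // MeasurableSet s }, |(μ B).toReal - (ν B).toReal|

/-- The posterior measure on `ℝ` in the model `x | θ ~ N(θ, 1/n)` with prior
Lebesgue density `π`, given an observation `x`. -/
noncomputable def posterior (π : ℝ → ℝ) (n : ℕ) (x : ℝ) : Measure ℝ :=
  volume.withDensity fun θ => ENNReal.ofReal
    (Real.exp (-(n : ℝ) * (θ - x) ^ 2 / 2) * π θ /
      ∫ u : ℝ, Real.exp (-(n : ℝ) * (u - x) ^ 2 / 2) * π u)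

/-!
In the local parameter `s = √n (θ - X_n)` the posterior has Lebesgue density proportional to
`φ(s) π(X_n + s/√n)`, `φ` the standard normal density. For fixed `ε` and `s`,
`X_n + s/√n → θ₀`, so by continuity of `π` at `θ₀`, its boundedness and dominated convergence
this density converges to `φ` in `L¹`; the `L¹` distance bounds the total variation distance.
Convergence for every `ε` implies convergence in probability.
-/

open Filter Topology

lemma tvDist_withDensity_ofReal_le {μ : Measure ℝ} {f g : ℝ → ℝ}
    (hf : Integrable f μ) (hg : Integrable g μ) (hf₀ : 0 ≤ᵐ[μ] f) (hg₀ : 0 ≤ᵐ[μ] g) :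
    tvDist (μ.withDensity fun x => ENNReal.ofReal (f x))
        (μ.withDensity fun x => ENNReal.ofReal (g x)) ≤ ∫ x, |f x - g x| ∂μ := by
  have hmeasure {h : ℝ → ℝ} (hh : Integrable h μ) (hh₀ : 0 ≤ᵐ[μ] h) {B : Set ℝ}
      (hB : MeasurableSet B) :
      (μ.withDensity fun x => ENNReal.ofReal (h x)) B = ENNReal.ofReal (∫ x in B, h x ∂μ) := by
    rw [withDensity_apply _ hB,
      ofReal_integral_eq_lintegral_ofReal hh.restrict (ae_restrict_of_ae hh₀)]
  refine ciSup_le fun ⟨B, hB⟩ => ?_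
  rw [hmeasure hf hf₀ hB, hmeasure hg hg₀ hB,
    ENNReal.toReal_ofReal (integral_nonneg_of_ae (ae_restrict_of_ae hf₀)),
    ENNReal.toReal_ofReal (integral_nonneg_of_ae (ae_restrict_of_ae hg₀)),
    ← integral_sub hf.restrict hg.restrict]
  calc |∫ x in B, (f x - g x) ∂μ| ≤ ∫ x in B, |f x - g x| ∂μ := abs_integral_le_integral_abs
    _ ≤ ∫ x, |f x - g x| ∂μ :=
      setIntegral_le_integral (hf.sub hg).abs (ae_of_all _ fun _ => abs_nonneg _)

lemma map_withDensity_mul_sub {c : ℝ} (hc : 0 < c) (x : ℝ) {f : ℝ → ENNReal}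
    (hf : Measurable f) :
    (volume.withDensity f).map (fun θ => c * (θ - x)) =
      volume.withDensity fun s => ENNReal.ofReal c⁻¹ * f (x + s / c) := by
  set T : ℝ → ℝ := fun θ => c * (θ - x)
  have hT : Measurable T := by fun_prop
  have hvolume : volume.map T = ENNReal.ofReal c⁻¹ • volume := by
    have hT_comp : T = (· + -(c * x)) ∘ (c * ·) := by
      funext θ
      simp only [T, Function.comp_apply]
      ring
    rw [hT_comp, ← Measure.map_map (measurable_add_const _) (measurable_const_mul c),
      Real.map_volume_mul_left hc.ne', Measure.map_smul, map_add_right_eq_self,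
      abs_of_pos (inv_pos.2 hc)]
  ext B hB
  rw [Measure.map_apply hT hB, withDensity_apply _ (hT hB), withDensity_apply _ hB,
    lintegral_const_mul _ (by fun_prop), ← smul_eq_mul, ← lintegral_smul_measure,
    ← Measure.restrict_smul, ← hvolume, setLIntegral_map hB (by fun_prop) hT]
  refine setLIntegral_congr_fun (hT hB) fun θ _ => ?_
  simp only [T]
  field_simp
  ring_nf

lemma exp_neg_sq_div_two_eq (s : ℝ) :
    Real.exp (-s ^ 2 / 2) = √(2 * Real.pi) * gaussianPDFReal 0 1 s := by
  simp only [gaussianPDFReal, NNReal.coe_one, mul_one, sub_zero]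
  field_simp

lemma mul_div_sqrt_sq {a : ℝ} (ha : 0 < a) (s : ℝ) : a * (s / √a) ^ 2 = s ^ 2 := by
  rw [div_pow, Real.sq_sqrt ha.le]
  field_simp

noncomputable def localPosteriorDensity (π : ℝ → ℝ) (c x s : ℝ) : ℝ :=
  gaussianPDFReal 0 1 s * π (x + s / c) / ∫ t, gaussianPDFReal 0 1 t * π (x + t / c)

section Rescaling

variable {π : ℝ → ℝ} {n : ℕ}

lemma integral_exp_mul_prior_eq (hn : n ≠ 0) (x : ℝ) :
    ∫ u, Real.exp (-(n : ℝ) * (u - x) ^ 2 / 2) * π u =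
      √(2 * Real.pi) / √n * ∫ t, gaussianPDFReal 0 1 t * π (x + t / √n) := by
  have hn₀ : (0 : ℝ) < n := by positivity
  have hc : 0 < √(n : ℝ) := Real.sqrt_pos.2 hn₀
  set h : ℝ → ℝ := fun u => Real.exp (-(n : ℝ) * (u - x) ^ 2 / 2) * π u
  have hsubst (t : ℝ) :
      h (x + t / √n) = √(2 * Real.pi) * (gaussianPDFReal 0 1 t * π (x + t / √n)) := by
    simp only [h, add_sub_cancel_left, neg_mul, mul_div_sqrt_sq hn₀, exp_neg_sq_div_two_eq]
    ring
  have hscale : ∫ t, h (x + t / √n) = √n * ∫ u, h u := by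
    rw [Measure.integral_comp_div (fun t => h (x + t)), integral_add_left_eq_self,
      abs_of_pos hc, smul_eq_mul]
  simp only [hsubst, integral_const_mul] at hscale
  rw [div_mul_eq_mul_div, eq_div_iff hc.ne']
  linarith

lemma map_posterior_eq_withDensity (hm : Measurable π) (hn : n ≠ 0) (x : ℝ) :
    (posterior π n x).map (fun θ => √n * (θ - x)) =
      volume.withDensity fun s => ENNReal.ofReal (localPosteriorDensity π √n x s) := by
  have hn₀ : (0 : ℝ) < n := by positivity
  have hc : 0 < √(n : ℝ) := Real.sqrt_pos.2 hn₀
  rw [_root_.posterior, map_withDensity_mul_sub hc x (by fun_prop)]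
  congr 1
  funext s
  rw [← ENNReal.ofReal_mul (inv_nonneg.2 hc.le), integral_exp_mul_prior_eq hn,
    add_sub_cancel_left, neg_mul, mul_div_sqrt_sq hn₀, exp_neg_sq_div_two_eq,
    localPosteriorDensity]
  by_cases hI : ∫ t, gaussianPDFReal 0 1 t * π (x + t / √n) = 0
  · simp [hI]
  · field_simp

end Rescaling

section Asymptotics

variable {π : ℝ → ℝ} {θ₀ C : ℝ}

lemma integrable_gaussianPDFReal_mul_comp (hm : Measurable π) (hb : ∀ y, ‖π y‖ ≤ C)
    {F : ℝ → ℝ} (hF : Measurable F) :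
    Integrable fun s => gaussianPDFReal 0 1 s * π (F s) := by
  simpa only [mul_comm] using
    (integrable_gaussianPDFReal 0 1).bdd_mul (f := fun s => π (F s))
      (hm.comp hF).aestronglyMeasurable
      (ae_of_all _ fun s => hb (F s))

lemma integrable_localPosteriorDensity (hm : Measurable π) (hb : ∀ y, ‖π y‖ ≤ C) (c x : ℝ) :
    Integrable (localPosteriorDensity π c x) :=
  (integrable_gaussianPDFReal_mul_comp hm hb (by fun_prop)).div_const _

lemma localPosteriorDensity_nonneg (hπ : ∀ y, 0 ≤ π y) (c x s : ℝ) :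
    0 ≤ localPosteriorDensity π c x s :=
  div_nonneg (mul_nonneg (gaussianPDFReal_nonneg 0 1 s) (hπ _))
    (integral_nonneg fun t => mul_nonneg (gaussianPDFReal_nonneg 0 1 t) (hπ _))

lemma measurable_integral_abs_localPosteriorDensity_sub (hm : Measurable π) (c : ℝ) :
    Measurable fun x => ∫ s, |localPosteriorDensity π c x s - gaussianPDFReal 0 1 s| := by
  have hweight : Measurable fun p : ℝ × ℝ => gaussianPDFReal 0 1 p.2 * π (p.1 + p.2 / c) := by
    fun_prop
  have hnormalizer : Measurable fun x => ∫ t, gaussianPDFReal 0 1 t * π (x + t / c) :=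
    hweight.stronglyMeasurable.integral_prod_right'.measurable
  have hintegrand : Measurable fun p : ℝ × ℝ =>
      |localPosteriorDensity π c p.1 p.2 - gaussianPDFReal 0 1 p.2| :=
    ((hweight.div (hnormalizer.comp measurable_fst)).sub (by fun_prop)).abs
  exact hintegrand.stronglyMeasurable.integral_prod_right'.measurable

lemma abs_localPosteriorDensity_le (hb : ∀ y, ‖π y‖ ≤ C) {L c x : ℝ} (hL : 0 < L)
    (hnormalizer : L ≤ |∫ t, gaussianPDFReal 0 1 t * π (x + t / c)|) (s : ℝ) :
    |localPosteriorDensity π c x s| ≤ C / L * gaussianPDFReal 0 1 s := by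
  have hφ := gaussianPDFReal_nonneg 0 1 s
  rw [localPosteriorDensity, abs_div, abs_mul, abs_of_nonneg hφ, mul_comm (C / L), mul_div_assoc]
  exact mul_le_mul_of_nonneg_left
    (div_le_div₀ ((norm_nonneg _).trans (hb 0)) (hb _) hL hnormalizer) hφ

variable {ι : Type*} {l : Filter ι} {c x : ι → ℝ}

lemma tendsto_add_div_of_tendsto_atTop (hx : Tendsto x l (𝓝 θ₀)) (hc : Tendsto c l atTop)
    (s : ℝ) : Tendsto (fun i => x i + s / c i) l (𝓝 θ₀) := by
  simpa using hx.add (tendsto_const_nhds.div_atTop hc)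

variable [l.IsCountablyGenerated]

lemma tendsto_integral_gaussianPDFReal_mul_comp (hm : Measurable π) (hb : ∀ y, ‖π y‖ ≤ C)
    (hcont : ContinuousAt π θ₀) (hx : Tendsto x l (𝓝 θ₀)) (hc : Tendsto c l atTop) :
    Tendsto (fun i => ∫ t, gaussianPDFReal 0 1 t * π (x i + t / c i)) l (𝓝 (π θ₀)) := by
  have h := tendsto_integral_filter_of_dominated_convergence
    (fun t => gaussianPDFReal 0 1 t * C)
    (Eventually.of_forall fun i => (by fun_prop : Measurable fun t =>
      gaussianPDFReal 0 1 t * π (x i + t / c i)).aestronglyMeasurable)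
    (Eventually.of_forall fun i => ae_of_all _ fun t => by
      rw [norm_mul, Real.norm_of_nonneg (gaussianPDFReal_nonneg 0 1 t)]
      exact mul_le_mul_of_nonneg_left (hb _) (gaussianPDFReal_nonneg 0 1 t))
    ((integrable_gaussianPDFReal 0 1).mul_const C)
    (ae_of_all _ fun t =>
      tendsto_const_nhds.mul (hcont.tendsto.comp (tendsto_add_div_of_tendsto_atTop hx hc t)))
  simpa only [integral_mul_const, integral_gaussianPDFReal_eq_one 0 one_ne_zero, one_mul] using h

lemma tendsto_localPosteriorDensity (hm : Measurable π) (hb : ∀ y, ‖π y‖ ≤ C)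
    (hcont : ContinuousAt π θ₀) (hπ₀ : π θ₀ ≠ 0) (hx : Tendsto x l (𝓝 θ₀))
    (hc : Tendsto c l atTop) (s : ℝ) :
    Tendsto (fun i => localPosteriorDensity π (c i) (x i) s) l (𝓝 (gaussianPDFReal 0 1 s)) := by
  have hweight : Tendsto (fun i => gaussianPDFReal 0 1 s * π (x i + s / c i)) l
      (𝓝 (gaussianPDFReal 0 1 s * π θ₀)) :=
    tendsto_const_nhds.mul (hcont.tendsto.comp (tendsto_add_div_of_tendsto_atTop hx hc s))
  have h := hweight.div (tendsto_integral_gaussianPDFReal_mul_comp hm hb hcont hx hc) hπ₀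
  rwa [mul_div_assoc, div_self hπ₀, mul_one] at h

lemma tendsto_integral_abs_localPosteriorDensity_sub (hm : Measurable π) (hb : ∀ y, ‖π y‖ ≤ C)
    (hcont : ContinuousAt π θ₀) (hπ₀ : π θ₀ ≠ 0) (hx : Tendsto x l (𝓝 θ₀))
    (hc : Tendsto c l atTop) :
    Tendsto (fun i => ∫ s, |localPosteriorDensity π (c i) (x i) s - gaussianPDFReal 0 1 s|) l
      (𝓝 0) := by
  set L := |π θ₀| / 2
  have hL : 0 < L := by positivity
  have hnormalizer : ∀ᶠ i in l, L < |∫ t, gaussianPDFReal 0 1 t * π (x i + t / c i)| :=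
    (tendsto_integral_gaussianPDFReal_mul_comp hm hb hcont hx hc).abs.eventually_const_lt
      (half_lt_self (abs_pos.2 hπ₀))
  have h := tendsto_integral_filter_of_dominated_convergence
    (F := fun i s => |localPosteriorDensity π (c i) (x i) s - gaussianPDFReal 0 1 s|)
    (fun s => (C / L + 1) * gaussianPDFReal 0 1 s)
    (Eventually.of_forall fun i =>
      ((integrable_localPosteriorDensity hm hb _ _).sub
        (integrable_gaussianPDFReal 0 1)).abs.aestronglyMeasurable)
    (hnormalizer.mono fun i hi => ae_of_all _ fun s => by
      have hdensity := abs_localPosteriorDensity_le hb hL hi.le s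
      calc ‖|localPosteriorDensity π (c i) (x i) s - gaussianPDFReal 0 1 s|‖
          ≤ |localPosteriorDensity π (c i) (x i) s| + |gaussianPDFReal 0 1 s| := by
            rw [Real.norm_eq_abs, abs_abs]
            exact abs_sub _ _
        _ ≤ (C / L + 1) * gaussianPDFReal 0 1 s := by
            rw [abs_of_nonneg (gaussianPDFReal_nonneg 0 1 s)]
            linarith)
    ((integrable_gaussianPDFReal 0 1).const_mul _)
    (ae_of_all _ fun s =>
      ((tendsto_localPosteriorDensity hm hb hcont hπ₀ hx hc s).sub_const _).abs)
  simpa only [sub_self, abs_zero, integral_zero] using h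

end Asymptotics

lemma tvDist_map_posterior_gaussianReal_le {π : ℝ → ℝ} {C : ℝ} (hm : Measurable π)
    (hπ : ∀ y, 0 ≤ π y) (hb : ∀ y, ‖π y‖ ≤ C) {n : ℕ} (hn : n ≠ 0) (x : ℝ) :
    tvDist ((posterior π n x).map fun θ => √n * (θ - x)) (gaussianReal 0 1) ≤
      ∫ s, |localPosteriorDensity π √n x s - gaussianPDFReal 0 1 s| := by
  rw [map_posterior_eq_withDensity hm hn, gaussianReal_of_var_ne_zero 0 one_ne_zero]
  exact tvDist_withDensity_ofReal_le (integrable_localPosteriorDensity hm hb _ _)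
    (integrable_gaussianPDFReal 0 1) (ae_of_all _ (localPosteriorDensity_nonneg hπ _ _))
    (ae_of_all _ (gaussianPDFReal_nonneg 0 1))

theorem parametric_BvM_general (π : ℝ → ℝ) (θ₀ Cb : ℝ)
    (hπ_meas : Measurable π) (hπ_nonneg : ∀ x, 0 ≤ π x)
    (hπ_bdd : ∀ x, π x ≤ Cb)
    (hπ_cont : ContinuousAt π θ₀) (hπ_pos : 0 < π θ₀) :
    ∀ η : ℝ, 0 < η →
      Filter.Tendsto (fun n : ℕ =>
          gaussianReal 0 1 {ε : ℝ | η < tvDist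
            (Measure.map (fun θ => Real.sqrt n * (θ - (θ₀ + ε / Real.sqrt n)))
              (posterior π n (θ₀ + ε / Real.sqrt n)))
            (gaussianReal 0 1)})
        Filter.atTop (nhds 0) := by
  intro η hη
  have hb : ∀ y, ‖π y‖ ≤ Cb := fun y => (Real.norm_of_nonneg (hπ_nonneg y)).trans_le (hπ_bdd y)
  set D : ℕ → ℝ → ℝ := fun n ε =>
    ∫ s, |localPosteriorDensity π √n (θ₀ + ε / √n) s - gaussianPDFReal 0 1 s|
  have hsqrt : Tendsto (fun n : ℕ => √(n : ℝ)) atTop atTop :=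
    Real.tendsto_sqrt_atTop.comp tendsto_natCast_atTop_atTop
  have hD : TendstoInMeasure (gaussianReal 0 1) D atTop 0 :=
    tendstoInMeasure_of_tendsto_ae
      (fun n => ((measurable_integral_abs_localPosteriorDensity_sub hπ_meas _).comp
        (by fun_prop)).aestronglyMeasurable)
      (ae_of_all _ fun ε => tendsto_integral_abs_localPosteriorDensity_sub hπ_meas hb hπ_cont
        hπ_pos.ne' (tendsto_add_div_of_tendsto_atTop tendsto_const_nhds hsqrt ε) hsqrt)
  refine tendsto_of_tendsto_of_tendsto_of_le_of_le' tendsto_const_nhds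
    (tendstoInMeasure_iff_dist.1 hD η hη) (Eventually.of_forall fun _ => zero_le) ?_
  filter_upwards [eventually_ne_atTop 0] with n hn
  refine measure_mono fun ε hε => ?_
  have hD_nonneg : 0 ≤ D n ε := integral_nonneg fun _ => abs_nonneg _
  simp only [Set.mem_ofPred_eq, Pi.zero_apply, Real.dist_eq, sub_zero, abs_of_nonneg hD_nonneg]
    at hε ⊢
  exact (hε.trans_le (tvDist_map_posterior_gaussianReal_le hπ_meas hπ_nonneg hb hn _)).le

theorem parametric_BvM (π : ℝ → ℝ) (θ₀ Cb : ℝ)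
    (hπ_meas : Measurable π) (hπ_nonneg : ∀ x, 0 ≤ π x)
    (hπ_prob : (∫ x : ℝ, π x) = 1)
    (hπ_bdd : ∀ x, π x ≤ Cb)
    (hπ_cont : ContinuousAt π θ₀) (hπ_pos : 0 < π θ₀) :
    ∀ η : ℝ, 0 < η →
      Filter.Tendsto (fun n : ℕ =>
          gaussianReal 0 1 {ε : ℝ | η < tvDist
            (Measure.map (fun θ => Real.sqrt n * (θ - (θ₀ + ε / Real.sqrt n)))
              (posterior π n (θ₀ + ε / Real.sqrt n)))
            (gaussianReal 0 1)})
        Filter.atTop (nhds 0) :=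
  parametric_BvM_general π θ₀ Cb hπ_meas hπ_nonneg hπ_bdd hπ_cont hπ_pos
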